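/- Let K = ℂ³ with orthonormal basis k_1,k_2,k_3, let h = (k_1⊗k_1 + k_2⊗k_2 + k_3⊗k_3)/√3 ∈ K⊗K, and let P be the orthogonal projector onto the orthogonal complement h^⊥ of the line ℂh in K⊗K, i.e. P = id − |h⟩⟨h|. Then the subspace W_2 := ker P equals ℂh and has dimension 1, and the subspace W_3 := ker(P⊗id) ∩ ker(id⊗P) ⊆ K^{⊗3} is zero. -/

import Mathlib

/-!
`Qh = |h⟩⟨h|` is rank one with `⟨h, h⟩ = 1`, so `ker (id - Qh)` is the line through `h`.
Contracting with `h` satisfies the snake identities `(⟨h| ⊗ id)(u ⊗ h) = u / 3` and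
`(id ⊗ ⟨h|)(h ⊗ u) = u / 3`, which give the Temperley–Lieb relation
`Q₂₃ Q₁₂ Q₂₃ = Q₂₃ / 9` on `K^{⊗3}`. A vector fixed by both `Q₁₂` and `Q₂₃` is then a ninth of
itself, hence zero.
-/

open TensorProduct

/-- The pairing functional `w ↦ ⟨h, w⟩` on `K ⊗ K`, `K = ℂ³`, against
`h = (1/√3) Σ_α k_α ⊗ k_α`; in coordinates `x ⊗ y ↦ (1/√3) Σ_α x_α y_α`. -/
noncomputable def hPairing :
    (Fin 3 → ℂ) ⊗[ℂ] (Fin 3 → ℂ) →ₗ[ℂ] ℂ :=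
  ((Real.sqrt 3 : ℂ))⁻¹ • ∑ α : Fin 3,
    TensorProduct.lift ((LinearMap.mul ℂ ℂ).compl₁₂ (LinearMap.proj α) (LinearMap.proj α))

/-- The unit vector `h = (1/√3)(k₁⊗k₁ + k₂⊗k₂ + k₃⊗k₃) ∈ K ⊗ K`, `K = ℂ³`. -/
noncomputable def hVec : (Fin 3 → ℂ) ⊗[ℂ] (Fin 3 → ℂ) :=
  ((Real.sqrt 3 : ℂ))⁻¹ • ∑ α : Fin 3, Pi.single α 1 ⊗ₜ[ℂ] Pi.single α 1

/-- The rank-one orthogonal projector `Q = |h⟩⟨h|` on `K ⊗ K`. -/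
noncomputable def Qh :
    (Fin 3 → ℂ) ⊗[ℂ] (Fin 3 → ℂ) →ₗ[ℂ] (Fin 3 → ℂ) ⊗[ℂ] (Fin 3 → ℂ) :=
  (LinearMap.toSpanSingleton ℂ _ hVec) ∘ₗ hPairing

/-- `A_{12} = A ⊗ id` on `K ⊗ (K ⊗ K)`, via the associator. -/
noncomputable def op12 {V : Type*} [AddCommGroup V] [Module ℂ V]
    (A : V ⊗[ℂ] V →ₗ[ℂ] V ⊗[ℂ] V) :
    V ⊗[ℂ] (V ⊗[ℂ] V) →ₗ[ℂ] V ⊗[ℂ] (V ⊗[ℂ] V) :=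
  (TensorProduct.assoc ℂ V V V).toLinearMap ∘ₗ
    (TensorProduct.map A LinearMap.id) ∘ₗ
      (TensorProduct.assoc ℂ V V V).symm.toLinearMap

/-- `A_{23} = id ⊗ A` on `K ⊗ (K ⊗ K)`. -/
noncomputable def op23 {V : Type*} [AddCommGroup V] [Module ℂ V]
    (A : V ⊗[ℂ] V →ₗ[ℂ] V ⊗[ℂ] V) :
    V ⊗[ℂ] (V ⊗[ℂ] V) →ₗ[ℂ] V ⊗[ℂ] (V ⊗[ℂ] V) :=
  TensorProduct.map LinearMap.id A

theorem ker_id_sub_toSpanSingleton_comp {R M : Type*} [Ring R] [AddCommGroup M] [Module R M]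
    (f : M →ₗ[R] R) (v : M) (hfv : f v = 1) :
    LinearMap.ker (LinearMap.id - LinearMap.toSpanSingleton R M v ∘ₗ f) = R ∙ v := by
  ext w
  simp only [LinearMap.mem_ker, LinearMap.sub_apply, LinearMap.id_apply, LinearMap.comp_apply,
    LinearMap.toSpanSingleton_apply, sub_eq_zero, Submodule.mem_span_singleton]
  constructor
  · exact fun hw => ⟨f w, hw.symm⟩
  · rintro ⟨c, rfl⟩
    simp [hfv]

section

variable {V : Type*} [AddCommGroup V] [Module ℂ V]

theorem op12_id_sub_apply (A : V ⊗[ℂ] V →ₗ[ℂ] V ⊗[ℂ] V) (w : V ⊗[ℂ] (V ⊗[ℂ] V)) :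
    op12 (LinearMap.id - A) w = w - op12 A w := by
  change TensorProduct.assoc ℂ V V V
    ((LinearMap.id - A).rTensor V ((TensorProduct.assoc ℂ V V V).symm w)) = _
  rw [LinearMap.rTensor_sub, LinearMap.sub_apply, LinearMap.rTensor_id, LinearMap.id_apply,
    map_sub, LinearEquiv.apply_symm_apply]
  rfl

theorem op23_id_sub_apply (A : V ⊗[ℂ] V →ₗ[ℂ] V ⊗[ℂ] V) (w : V ⊗[ℂ] (V ⊗[ℂ] V)) :
    op23 (LinearMap.id - A) w = w - op23 A w := by
  change (LinearMap.id - A).lTensor V w = _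
  rw [LinearMap.lTensor_sub, LinearMap.sub_apply, LinearMap.lTensor_id, LinearMap.id_apply]
  rfl

theorem op12_toSpanSingleton_comp_apply (f : V ⊗[ℂ] V →ₗ[ℂ] ℂ) (v : V ⊗[ℂ] V)
    (w : V ⊗[ℂ] (V ⊗[ℂ] V)) :
    op12 (LinearMap.toSpanSingleton ℂ _ v ∘ₗ f) w =
      TensorProduct.assoc ℂ V V V
        (v ⊗ₜ TensorProduct.lid ℂ V (f.rTensor V ((TensorProduct.assoc ℂ V V V).symm w))) := by
  simp only [op12, LinearMap.comp_apply, LinearEquiv.coe_coe]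
  congr 1
  induction (TensorProduct.assoc ℂ V V V).symm w using TensorProduct.induction_on with
  | zero => simp
  | tmul x y => simp [TensorProduct.smul_tmul]
  | add x y hx hy => simp [hx, hy, TensorProduct.tmul_add]

theorem op23_toSpanSingleton_comp_apply (f : V ⊗[ℂ] V →ₗ[ℂ] ℂ) (v : V ⊗[ℂ] V)
    (w : V ⊗[ℂ] (V ⊗[ℂ] V)) :
    op23 (LinearMap.toSpanSingleton ℂ _ v ∘ₗ f) w =
      TensorProduct.rid ℂ V (f.lTensor V w) ⊗ₜ v := by
  induction w using TensorProduct.induction_on with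
  | zero => simp
  | tmul x y => simp [op23, TensorProduct.smul_tmul]
  | add x y hx hy => simp_all [TensorProduct.add_tmul]

theorem op23_op12_op23_of_snake (f : V ⊗[ℂ] V →ₗ[ℂ] ℂ) (v : V ⊗[ℂ] V) (c₁ c₂ : ℂ)
    (snake₁ : ∀ u : V,
      TensorProduct.lid ℂ V (f.rTensor V ((TensorProduct.assoc ℂ V V V).symm (u ⊗ₜ v))) = c₁ • u)
    (snake₂ : ∀ u : V,
      TensorProduct.rid ℂ V (f.lTensor V (TensorProduct.assoc ℂ V V V (v ⊗ₜ u))) = c₂ • u)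
    (A : V ⊗[ℂ] V →ₗ[ℂ] V ⊗[ℂ] V) (hA : A = LinearMap.toSpanSingleton ℂ _ v ∘ₗ f)
    (w : V ⊗[ℂ] (V ⊗[ℂ] V)) :
    op23 A (op12 A (op23 A w)) = (c₁ * c₂) • op23 A w := by
  subst hA
  rw [op23_toSpanSingleton_comp_apply f v w, op12_toSpanSingleton_comp_apply, snake₁,
    op23_toSpanSingleton_comp_apply, TensorProduct.tmul_smul, map_smul, map_smul, map_smul,
    snake₂, smul_smul, TensorProduct.smul_tmul']

theorem ker_op12_inf_ker_op23_eq_bot (A : V ⊗[ℂ] V →ₗ[ℂ] V ⊗[ℂ] V) (c : ℂ) (hc : c ≠ 1)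
    (hTL : ∀ w, op23 A (op12 A (op23 A w)) = c • op23 A w) :
    LinearMap.ker (op12 (LinearMap.id - A)) ⊓ LinearMap.ker (op23 (LinearMap.id - A)) = ⊥ := by
  refine (Submodule.eq_bot_iff _).2 fun w hw => ?_
  obtain ⟨h12, h23⟩ := hw
  rw [SetLike.mem_coe, LinearMap.mem_ker, op12_id_sub_apply, sub_eq_zero] at h12
  rw [SetLike.mem_coe, LinearMap.mem_ker, op23_id_sub_apply, sub_eq_zero] at h23
  have hw : w = c • w := by
    simpa only [← h23, ← h12] using hTL w
  have : (1 - c) • w = 0 := by rw [sub_smul, one_smul, ← hw, sub_self]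
  exact (smul_eq_zero.1 this).resolve_left (sub_ne_zero.2 hc.symm)

end

theorem inv_sqrt_three_mul_self : ((Real.sqrt 3 : ℂ))⁻¹ * ((Real.sqrt 3 : ℂ))⁻¹ = 3⁻¹ := by
  rw [← mul_inv, ← Complex.ofReal_mul, Real.mul_self_sqrt (by norm_num)]
  norm_num

theorem hPairing_tmul (x y : Fin 3 → ℂ) :
    hPairing (x ⊗ₜ y) = ((Real.sqrt 3 : ℂ))⁻¹ * ∑ α, x α * y α := by
  simp [hPairing]

theorem hPairing_tmul_single (x : Fin 3 → ℂ) (α : Fin 3) :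
    hPairing (x ⊗ₜ Pi.single α 1) = ((Real.sqrt 3 : ℂ))⁻¹ * x α := by
  simp [hPairing_tmul, Pi.single_apply]

theorem hPairing_single_tmul (x : Fin 3 → ℂ) (α : Fin 3) :
    hPairing (Pi.single α 1 ⊗ₜ x) = ((Real.sqrt 3 : ℂ))⁻¹ * x α := by
  simp [hPairing_tmul, Pi.single_apply]

theorem hPairing_hVec : hPairing hVec = 1 := by
  simp only [hVec, map_smul, map_sum, hPairing_tmul_single, Pi.single_eq_same, mul_one,
    Finset.sum_const, Finset.card_univ, Fintype.card_fin, smul_eq_mul, nsmul_eq_mul]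
  rw [mul_left_comm, inv_sqrt_three_mul_self]
  norm_num

theorem lid_rTensor_hPairing_tmul_hVec (u : Fin 3 → ℂ) :
    TensorProduct.lid ℂ _ (hPairing.rTensor _
      ((TensorProduct.assoc ℂ _ _ _).symm (u ⊗ₜ hVec))) = (3 : ℂ)⁻¹ • u := by
  simp [hVec, TensorProduct.tmul_sum, hPairing_tmul_single, mul_smul, ← Finset.smul_sum]
  rw [← pi_eq_sum_univ' u, smul_smul, inv_sqrt_three_mul_self]

theorem rid_lTensor_hPairing_hVec_tmul (u : Fin 3 → ℂ) :
    TensorProduct.rid ℂ _ (hPairing.lTensor _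
      (TensorProduct.assoc ℂ _ _ _ (hVec ⊗ₜ u))) = (3 : ℂ)⁻¹ • u := by
  simp [hVec, ← TensorProduct.smul_tmul', TensorProduct.sum_tmul, hPairing_single_tmul, mul_smul,
    ← Finset.smul_sum]
  rw [← pi_eq_sum_univ' u, smul_smul, inv_sqrt_three_mul_self]

/-- For `P = id − |h⟩⟨h|` on `K ⊗ K` with `K = ℂ³` and `h` the normalized maximally
entangled vector, `W₂ = ker P = ℂ·h` is one-dimensional and
`W₃ = ker(P ⊗ id) ∩ ker(id ⊗ P) ⊆ K^{⊗3}` is zero. -/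
theorem stmt_9 (P : (Fin 3 → ℂ) ⊗[ℂ] (Fin 3 → ℂ) →ₗ[ℂ] (Fin 3 → ℂ) ⊗[ℂ] (Fin 3 → ℂ))
    (hP : P = LinearMap.id - Qh) :
    LinearMap.ker P = Submodule.span ℂ {hVec} ∧
    Module.finrank ℂ (LinearMap.ker P) = 1 ∧
    LinearMap.ker (op12 P) ⊓ LinearMap.ker (op23 P) = ⊥ := by
  subst hP
  have hker : LinearMap.ker (LinearMap.id - Qh) = ℂ ∙ hVec :=
    ker_id_sub_toSpanSingleton_comp hPairing hVec hPairing_hVec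
  have hVec_ne_zero : hVec ≠ 0 := fun h => by simpa [h] using hPairing_hVec
  refine ⟨hker, by rw [hker, finrank_span_singleton hVec_ne_zero], ?_⟩
  refine ker_op12_inf_ker_op23_eq_bot Qh (3⁻¹ * 3⁻¹) (by norm_num) ?_
  exact op23_op12_op23_of_snake hPairing hVec _ _ lid_rTensor_hPairing_tmul_hVec
    rid_lTensor_hPairing_hVec_tmul Qh rfl
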